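/- Let 𝒦 = (W, ⊏, V) be a transitive Kripke model. Define for each world w the theory T_w with axioms {A : 𝒦, w ⊨ A and 𝒦, w ⊨ □A} and rules modus ponens and necessitation. Then each set of axioms of T_w is closed under modus ponens and under necessitation, and the resulting provability model 𝒫 = (W, ⊏, {T_w}, V) satisfies: for all formulas A and worlds w, 𝒦, w ⊨ A iff 𝒫, w ⊩ A. -/

import Mathlib

/-- Formulas of the modal language with atoms, ⊥, → and □. -/
inductive Fml : Type
  | atom : ℕ → Fml
  | bot  : Fml
  | imp  : Fml → Fml → Fml
  | box  : Fml → Fml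
deriving DecidableEq

/-- Classical Boolean evaluation where boxed formulas behave like atoms:
the valuation `v` is queried on atoms and on boxed formulas. -/
def evalCL (v : Fml → Bool) : Fml → Bool
  | .atom n => v (.atom n)
  | .bot => false
  | .imp A B => !(evalCL v A) || evalCL v B
  | .box A => v (.box A)

/-- Classical tautology over the modal language (□-formulas act as atoms). -/
def Taut (A : Fml) : Prop := ∀ v, evalCL v A = true

/-- A formula is purely modal if every atom is in the scope of some □. -/
def PurelyModal : Fml → Prop
  | .atom _ => False
  | .bot => True
  | .imp A B => PurelyModal A ∧ PurelyModal B
  | .box _ => True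

/-- A provability pre-model: a frame, a theory (given by its set of
derivable formulas) at each world, and a valuation. -/
structure PModel (W : Type*) where
  R : W → W → Prop
  T : W → Set Fml
  V : W → ℕ → Prop

/-- Forcing in a provability pre-model. -/
def pforce {W : Type*} (P : PModel W) : W → Fml → Prop
  | w, .atom n => P.V w n
  | _, .bot => False
  | w, .imp A B => pforce P w A → pforce P w B
  | w, .box A => ∀ u, P.R w u → A ∈ P.T u

/-- `𝒫, w ⊩⁺ A` iff some predecessor `u ⊏ w` has `𝒫, v ⊩ A` for all `v ⊐⁺ u`. -/
def pforcePlus {W : Type*} (P : PModel W) (w : W) (A : Fml) : Prop :=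
  ∃ u, P.R u w ∧ ∀ v, Relation.TransGen P.R u v → pforce P v A

/-- A world is ⊏-accessible if it has a ⊏-predecessor. -/
def Accessible {W : Type*} (P : PModel W) (w : W) : Prop := ∃ v, P.R v w

/-- A classical theory: contains all classical tautologies and is closed
under modus ponens. -/
def IsClassicalTheory (T : Set Fml) : Prop :=
  (∀ A, Taut A → A ∈ T) ∧ (∀ A B, Fml.imp A B ∈ T → A ∈ T → B ∈ T)

/-- Provability model: classical theories at accessible worlds and modal
completeness. -/
def IsPModel {W : Type*} (P : PModel W) : Prop :=
  (∀ w, Accessible P w → IsClassicalTheory (P.T w)) ∧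
  (∀ w A, PurelyModal A → pforcePlus P w A → A ∈ P.T w)

/-- A Kripke model. -/
structure KModel (W : Type*) where
  R : W → W → Prop
  V : W → ℕ → Prop

/-- Kripke forcing. -/
def kforce {W : Type*} (K : KModel W) : W → Fml → Prop
  | w, .atom n => K.V w n
  | _, .bot => False
  | w, .imp A B => kforce K w A → kforce K w B
  | w, .box A => ∀ u, K.R w u → kforce K u A

/-- For a transitive Kripke model `𝒦`, taking as theory at `w` the set
`{A : 𝒦,w ⊨ A and 𝒦,w ⊨ □A}` yields a set of axioms closed under modus
ponens and necessitation, and the resulting provability model is equivalent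
to `𝒦`. -/
theorem transitive_kripke_to_provability_model {W : Type*} (K : KModel W)
    (htrans : Transitive K.R) (P : PModel W)
    (hP : P = ⟨K.R, fun w => {A | kforce K w A ∧ kforce K w (.box A)}, K.V⟩) :
    (∀ w A B, Fml.imp A B ∈ P.T w → A ∈ P.T w → B ∈ P.T w) ∧
    (∀ w A, A ∈ P.T w → Fml.box A ∈ P.T w) ∧
    IsPModel P ∧
    (∀ w A, kforce K w A ↔ pforce P w A) := by
  classical
  subst hP
  have taut_force : ∀ w A, Taut A → kforce K w A := by
    intro w A hA
    let v : Fml → Bool := fun F => decide (kforce K w F)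
    have key : ∀ B, evalCL v B = true ↔ kforce K w B := by
      intro B
      induction B with
      | atom n => simp [evalCL, v, kforce]; exact @decide_eq_true_iff _ _
      | bot => simp [evalCL, kforce]
      | imp A B ihA ihB =>
        simp only [evalCL, kforce, Bool.or_eq_true, ← ihA, ← ihB]
        cases evalCL v A <;> cases evalCL v B <;> simp
      | box A ih => simp [evalCL, v, kforce]; exact @decide_eq_true_iff _ _
    exact (key A).mp (hA v)
  have main : ∀ A w, kforce K w A ↔
      pforce ⟨K.R, fun w => {A | kforce K w A ∧ kforce K w (.box A)}, K.V⟩ w A := by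
    intro A
    induction A with
    | atom n => intro w; exact Iff.rfl
    | bot => intro w; exact Iff.rfl
    | imp A B ihA ihB =>
      intro w
      simp only [kforce, pforce, ihA, ihB]
    | box A ih =>
      intro w
      constructor
      · intro h u hu
        exact ⟨h u hu, fun v hv => h v (htrans hu hv)⟩
      · intro h u hu
        exact (h u hu).1
  refine ⟨?_, ?_, ⟨?_, ?_⟩, fun w A => main A w⟩
  · rintro w A B ⟨h1, h2⟩ ⟨h3, h4⟩
    exact ⟨h1 h3, fun u hu => h2 u hu (h4 u hu)⟩
  · rintro w A ⟨h1, h2⟩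
    exact ⟨h2, fun u hu v hv => h2 v (htrans hu hv)⟩
  · rintro w _
    constructor
    · intro A hA
      refine ⟨taut_force w A hA, fun u _ => taut_force u A hA⟩
    · rintro A B ⟨h1, h2⟩ ⟨h3, h4⟩
      exact ⟨h1 h3, fun u hu => h2 u hu (h4 u hu)⟩
  · rintro w A _ ⟨u, hu, hall⟩
    have hw : kforce K w A := (main A w).mpr (hall w (Relation.TransGen.single hu))
    refine ⟨hw, fun x hx => (main A x).mpr
      (hall x (Relation.TransGen.head hu (Relation.TransGen.single hx)))⟩
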